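/- arXiv:2411.02664 — 2 statements merged into one kernel-verified Lean document; each statement's English description precedes it below -/
import Mathlib

section
/- EVAL-X optimality implies non-encoding (weak detection): in a finite probability space, if an explanation e achieves the optimal EVAL-X score, i.e. q(y|x) = q(y|x_v) for all v with P(e(x)=v) > 0 and all x in the support with e(x) = v, then for every such v and every a with P(x_v = a, e(x) = v) > 0, the label y is conditionally independent of the indicator E_v = 1[e(x) = v] given x_v = a. -/
open scoped Classical

/-- Probability of an event under a probability mass function on a finite space. -/
noncomputable def Pr {Ω : Type*} [Fintype Ω] (p : Ω → ℝ) (E : Ω → Prop) : ℝ :=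
  ∑ ω, if E ω then p ω else 0

/-- Conditional probability `P(A | B)`. -/
noncomputable def cPr {Ω : Type*} [Fintype Ω] (p : Ω → ℝ) (A B : Ω → Prop) : ℝ :=
  Pr p (fun ω => A ω ∧ B ω) / Pr p B

/-- Conditional independence of a (finite-valued) random variable `y` and a binary
variable given by the event `E`, given the conditioning event `C`. -/
def CondIndepBin {Ω Y : Type*} [Fintype Ω] (p : Ω → ℝ) (y : Ω → Y) (E C : Ω → Prop) : Prop :=
  ∀ y₀ : Y,
    cPr p (fun ω => y ω = y₀ ∧ E ω) C
        = cPr p (fun ω => y ω = y₀) C * cPr p E C ∧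
    cPr p (fun ω => y ω = y₀ ∧ ¬ E ω) C
        = cPr p (fun ω => y ω = y₀) C * cPr p (fun ω => ¬ E ω) C

/-!
On the event `{x_v = a, e(x) = v}` the set of points agreeing with `x` on the mask `e(x)` is
exactly `{x_v = a}`, so EVAL-X optimality says that `q(y | x)` is the constant
`c = q(y | x_v = a)` on every atom of `x` inside that event. Summing over these atoms gives
`q(y, e(x) = v, x_v = a) = c · q(e(x) = v, x_v = a)`, which is one half of the conditional
independence; the half for `e(x) ≠ v` follows by subtracting it from
`q(y, x_v = a) = c · q(x_v = a)`.
-/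

section Probability

variable {Ω : Type*} [Fintype Ω] (p : Ω → ℝ)

theorem Pr_congr {E F : Ω → Prop} (h : ∀ ω, E ω ↔ F ω) : Pr p E = Pr p F := by
  rw [show E = F from funext fun ω => propext (h ω)]

theorem Pr_nonneg (hp : ∀ ω, 0 ≤ p ω) (E : Ω → Prop) : 0 ≤ Pr p E :=
  Finset.sum_nonneg fun ω _ => by split_ifs <;> simp [hp ω]

theorem Pr_mono (hp : ∀ ω, 0 ≤ p ω) {E F : Ω → Prop} (h : ∀ ω, E ω → F ω) :
    Pr p E ≤ Pr p F :=
  Finset.sum_le_sum fun ω _ => by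
    by_cases hE : E ω
    · simp [hE, h ω hE]
    · by_cases hF : F ω <;> simp [hE, hF, hp ω]

theorem Pr_eq_zero_of_forall_not {E : Ω → Prop} (h : ∀ ω, ¬ E ω) : Pr p E = 0 :=
  Finset.sum_eq_zero fun ω _ => if_neg (h ω)

theorem exists_pos_of_Pr_ne_zero (hp : ∀ ω, 0 ≤ p ω) {E : Ω → Prop} (h : Pr p E ≠ 0) :
    ∃ ω, E ω ∧ 0 < p ω := by
  obtain ⟨ω, -, hω⟩ := Finset.exists_ne_zero_of_sum_ne_zero h
  by_cases hE : E ω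
  · exact ⟨ω, hE, (hp ω).lt_of_ne (Ne.symm (by simpa [hE] using hω))⟩
  · simp [hE] at hω

theorem Pr_not_and (A B : Ω → Prop) :
    Pr p (fun ω => ¬ A ω ∧ B ω) = Pr p B - Pr p (fun ω => A ω ∧ B ω) := by
  rw [eq_sub_iff_add_eq, Pr, Pr, Pr, ← Finset.sum_add_distrib]
  refine Finset.sum_congr rfl fun ω _ => ?_
  by_cases hA : A ω <;> by_cases hB : B ω <;> simp [hA, hB]

theorem Pr_eq_sum_fiber {β : Type*} (g : Ω → β) (Q : Ω → Prop) :
    Pr p Q = ∑ b ∈ Finset.univ.image g, Pr p (fun ω => Q ω ∧ g ω = b) := by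
  rw [Pr, ← Finset.sum_fiberwise_of_maps_to (fun ω _ => Finset.mem_image_of_mem g
    (Finset.mem_univ ω))]
  refine Finset.sum_congr rfl fun b _ => ?_
  rw [Finset.sum_filter, Pr]
  refine Finset.sum_congr rfl fun ω _ => ?_
  by_cases hQ : Q ω <;> by_cases hg : g ω = b <;> simp [hQ, hg]

/-- A null fiber carries no mass of `Q`, so the identity holds on it for any `c`. -/
theorem Pr_and_fiber_eq_mul (hp : ∀ ω, 0 ≤ p ω) {β : Type*} (g : Ω → β) (b : β)
    (Q : Ω → Prop) (c : ℝ)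
    (hc : ∀ ω, 0 < p ω → g ω = b → cPr p Q (fun ω' => g ω' = b) = c) :
    Pr p (fun ω => Q ω ∧ g ω = b) = c * Pr p (fun ω => g ω = b) := by
  by_cases h0 : Pr p (fun ω => g ω = b) = 0
  · rw [h0, mul_zero]
    exact le_antisymm (h0 ▸ Pr_mono p hp fun ω h => h.2) (Pr_nonneg p hp _)
  · obtain ⟨ω, hgω, hpω⟩ := exists_pos_of_Pr_ne_zero p hp h0
    exact (div_eq_iff h0).mp (hc ω hpω hgω)

theorem Pr_and_eq_mul_of_cPr_fiber_eq (hp : ∀ ω, 0 ≤ p ω) {β : Type*} (g : Ω → β)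
    (Q B : Ω → Prop) (c : ℝ) (hB : ∀ ω ω', g ω' = g ω → B ω → B ω')
    (hc : ∀ ω, 0 < p ω → B ω → cPr p Q (fun ω' => g ω' = g ω) = c) :
    Pr p (fun ω => Q ω ∧ B ω) = c * Pr p B := by
  rw [Pr_eq_sum_fiber p g, Pr_eq_sum_fiber p g B, Finset.mul_sum]
  refine Finset.sum_congr rfl fun b hb => ?_
  obtain ⟨ω₀, -, rfl⟩ := Finset.mem_image.mp hb
  by_cases hB₀ : B ω₀
  · have hfiber : ∀ ω, g ω = g ω₀ → B ω := fun ω hω => hB ω₀ ω hω hB₀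
    have hQB : Pr p (fun ω => (Q ω ∧ B ω) ∧ g ω = g ω₀) = Pr p (fun ω => Q ω ∧ g ω = g ω₀) :=
      Pr_congr p fun ω => ⟨fun h => ⟨h.1.1, h.2⟩, fun h => ⟨⟨h.1, hfiber ω h.2⟩, h.2⟩⟩
    have hB' : Pr p (fun ω => B ω ∧ g ω = g ω₀) = Pr p (fun ω => g ω = g ω₀) :=
      Pr_congr p fun ω => and_iff_right_of_imp (hfiber ω)
    rw [hQB, hB']
    exact Pr_and_fiber_eq_mul p hp g (g ω₀) Q c fun ω hpω hω =>
      hω ▸ hc ω hpω (hfiber ω hω)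
  · have hout : ∀ ω, g ω = g ω₀ → ¬ B ω := fun ω hω hBω => hB₀ (hB ω ω₀ hω.symm hBω)
    rw [Pr_eq_zero_of_forall_not p fun ω h => hout ω h.2 h.1.2,
      Pr_eq_zero_of_forall_not p fun ω h => hout ω h.2 h.1, mul_zero]

theorem cPr_indep_of_Pr_and_eq_mul {Q E C : Ω → Prop} (hC : Pr p C ≠ 0)
    (h : Pr p (fun ω => Q ω ∧ E ω ∧ C ω) = cPr p Q C * Pr p (fun ω => E ω ∧ C ω)) :
    cPr p (fun ω => Q ω ∧ E ω) C = cPr p Q C * cPr p E C ∧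
      cPr p (fun ω => Q ω ∧ ¬ E ω) C = cPr p Q C * cPr p (fun ω => ¬ E ω) C := by
  have hQC : Pr p (fun ω => Q ω ∧ C ω) = cPr p Q C * Pr p C := (div_mul_cancel₀ _ hC).symm
  have hQnotE : Pr p (fun ω => (Q ω ∧ ¬ E ω) ∧ C ω)
      = Pr p (fun ω => Q ω ∧ C ω) - Pr p (fun ω => Q ω ∧ E ω ∧ C ω) :=
    calc Pr p (fun ω => (Q ω ∧ ¬ E ω) ∧ C ω) = Pr p (fun ω => ¬ E ω ∧ Q ω ∧ C ω) :=
          Pr_congr p fun ω => by tauto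
      _ = Pr p (fun ω => Q ω ∧ C ω) - Pr p (fun ω => E ω ∧ Q ω ∧ C ω) := Pr_not_and p E _
      _ = _ := by rw [Pr_congr p fun ω => and_left_comm]
  generalize cPr p Q C = c at h hQC ⊢
  unfold cPr
  constructor
  · rw [Pr_congr p fun ω => and_assoc, h, mul_div_assoc]
  · rw [hQnotE, Pr_not_and p E C, h, hQC, ← mul_sub, mul_div_assoc]

end Probability

theorem evalx_optimal_implies_nonencoding_general
    {Ω A Y : Type*} [Fintype Ω] {d : ℕ}
    (p : Ω → ℝ) (hp : ∀ ω, 0 ≤ p ω)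
    (x : Ω → Fin d → A) (y : Ω → Y)
    (e : (Fin d → A) → (Fin d → Bool))
    (hopt : ∀ ω, 0 < p ω → ∀ y₀ : Y,
      cPr p (fun ω' => y ω' = y₀) (fun ω' => x ω' = x ω)
        = cPr p (fun ω' => y ω' = y₀)
            (fun ω' => ∀ i, e (x ω) i = true → x ω' i = x ω i)) :
    ∀ (v : Fin d → Bool) (a : Fin d → A),
      0 < Pr p (fun ω => (∀ i, v i = true → x ω i = a i) ∧ e (x ω) = v) →
      CondIndepBin p y (fun ω => e (x ω) = v)
        (fun ω => ∀ i, v i = true → x ω i = a i) := by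
  intro v a hpos y₀
  set C : Ω → Prop := fun ω => ∀ i, v i = true → x ω i = a i
  set E : Ω → Prop := fun ω => e (x ω) = v
  have hC : Pr p C ≠ 0 := (hpos.trans_le (Pr_mono p hp fun ω h => h.1)).ne'
  have hmask : ∀ ω, E ω → C ω → ∀ ω',
      (∀ i, e (x ω) i = true → x ω' i = x ω i) ↔ C ω' := by
    intro ω hE hCω ω'
    rw [hE]
    exact forall₂_congr fun i hi => by rw [hCω i hi]
  refine cPr_indep_of_Pr_and_eq_mul p hC ?_
  refine Pr_and_eq_mul_of_cPr_fiber_eq p hp x _ (fun ω => E ω ∧ C ω) _ ?_ ?_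
  · intro ω ω' hx h
    simpa only [E, C, hx] using h
  · intro ω hpω ⟨hE, hCω⟩
    rw [hopt ω hpω y₀, cPr, cPr, Pr_congr p fun ω' => and_congr_right' (hmask ω hE hCω ω'),
      Pr_congr p (hmask ω hE hCω)]

/-- EVAL-X optimality implies non-encoding (weak detection): if on the
support `q(y|x) = q(y|x_{e(x)})`, then for every mask `v` and value `a` with
`P(x_v = a, e(x) = v) > 0`, the label `y` is conditionally independent of the indicator
`E_v = 1[e(x) = v]` given `x_v = a`. -/
theorem evalx_optimal_implies_nonencoding
    {Ω A Y : Type*} [Fintype Ω] [Fintype Y] {d : ℕ}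
    (p : Ω → ℝ) (hp : ∀ ω, 0 ≤ p ω) (hsum : ∑ ω, p ω = 1)
    (x : Ω → Fin d → A) (y : Ω → Y)
    (e : (Fin d → A) → (Fin d → Bool))
    (hopt : ∀ ω, 0 < p ω → ∀ y₀ : Y,
      cPr p (fun ω' => y ω' = y₀) (fun ω' => x ω' = x ω)
        = cPr p (fun ω' => y ω' = y₀)
            (fun ω' => ∀ i, e (x ω) i = true → x ω' i = x ω i)) :
    ∀ (v : Fin d → Bool) (a : Fin d → A),
      0 < Pr p (fun ω => (∀ i, v i = true → x ω i = a i) ∧ e (x ω) = v) →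
      CondIndepBin p y (fun ω => e (x ω) = v)
        (fun ω => ∀ i, v i = true → x ω i = a i) :=
  evalx_optimal_implies_nonencoding_general p hp x y e hopt
end

section
/- Position-based encoding satisfies the encoding definition: suppose background pixel values (x₁, x₂) are jointly independent of a binary label y with 0 < P(y = dog) < 1, and the explanation selects coordinate 1 exactly when y is determined to be 'dog' from x (i.e., E_{ξ₁} = 1[q(y=dog|x)=1], with q(y|x) deterministic). Then P(E_{ξ₁} = 1 | x₁ = a) = P(y = dog) ∈ (0,1) and P(y = dog | x₁ = a, E_{ξ₁} = 1) = 1 ≠ 0 = P(y = dog | x₁ = a, E_{ξ₁} = 0), so y is conditionally dependent on E_{ξ₁} given x₁ = a. -/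
/-!
Since `e x = 0` exactly when the label is `dog`, the event `E_{ξ₁}` *is* the event `y = dog`.
Summing the joint independence over `x₂` shows `x₁ ⫫ y`, so conditioning on `x₁ = a` leaves
`P(E_{ξ₁}) = P(y = dog)` strictly between `0` and `1`; and an event with conditional probability
`q ∈ (0, 1)` is not conditionally independent of itself, as that would force `q = q²`.
-/

open scoped Classical

section

variable {Ω : Type*} [Fintype Ω] (p : Ω → ℝ)

theorem Pr_eq_sum_Pr_and_eq {B : Type*} [Fintype B] (u : Ω → B) (E : Ω → Prop) :
    Pr p E = ∑ b, Pr p (fun ω => E ω ∧ u ω = b) := by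
  unfold Pr
  rw [Finset.sum_comm]
  refine Finset.sum_congr rfl fun ω _ => ?_
  by_cases hE : E ω <;> simp [hE]

theorem Pr_and_eq_mul_of_forall_and_eq {B : Type*} [Fintype B] (u : Ω → B) {E F : Ω → Prop}
    (h : ∀ b, Pr p (fun ω => E ω ∧ u ω = b ∧ F ω) = Pr p (fun ω => E ω ∧ u ω = b) * Pr p F) :
    Pr p (fun ω => E ω ∧ F ω) = Pr p E * Pr p F := by
  rw [Pr_eq_sum_Pr_and_eq p u, Pr_eq_sum_Pr_and_eq p u E, Finset.sum_mul]
  refine Finset.sum_congr rfl fun b _ => ?_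
  rw [← h b]
  exact Pr_congr p fun ω => by tauto

theorem cPr_eq_Pr_of_indep {A B : Ω → Prop} (hB : Pr p B ≠ 0)
    (h : Pr p (fun ω => B ω ∧ A ω) = Pr p B * Pr p A) : cPr p A B = Pr p A := by
  rw [cPr, Pr_congr p fun ω => and_comm, h, mul_div_cancel_left₀ _ hB]

theorem cPr_eq_one_of_imp {A B : Ω → Prop} (hB : Pr p B ≠ 0) (h : ∀ ω, B ω → A ω) :
    cPr p A B = 1 := by
  rw [cPr, Pr_congr p fun ω => ⟨And.right, fun hb => ⟨h ω hb, hb⟩⟩, div_self hB]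

theorem cPr_eq_zero_of_imp_not {A B : Ω → Prop} (h : ∀ ω, B ω → ¬ A ω) : cPr p A B = 0 := by
  have hAB : Pr p (fun ω => A ω ∧ B ω) = 0 :=
    Finset.sum_eq_zero fun ω _ => if_neg fun hab => h ω hab.2 hab.1
  rw [cPr, hAB, zero_div]

theorem not_condIndepBin_self {Y : Type*} (y : Ω → Y) (y₀ : Y) (C : Ω → Prop)
    (h0 : 0 < cPr p (fun ω => y ω = y₀) C) (h1 : cPr p (fun ω => y ω = y₀) C < 1) :
    ¬ CondIndepBin p y (fun ω => y ω = y₀) C := by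
  intro hci
  have hsq := (hci y₀).1
  simp only [and_self] at hsq
  nlinarith

end

theorem position_based_encoding_general
    {Ω X A : Type*} [Fintype Ω] [Fintype A]
    (p : Ω → ℝ)
    (x : Ω → X) (x1 x2 : X → A) (g : X → Bool)
    (e : X → Fin 2) (he : ∀ z, e z = 0 ↔ g z = true)
    (hindep : ∀ (a b : A) (c : Bool),
      Pr p (fun ω => x1 (x ω) = a ∧ x2 (x ω) = b ∧ g (x ω) = c)
        = Pr p (fun ω => x1 (x ω) = a ∧ x2 (x ω) = b) * Pr p (fun ω => g (x ω) = c))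
    (h0 : 0 < Pr p (fun ω => g (x ω) = true))
    (h1 : Pr p (fun ω => g (x ω) = true) < 1) :
    ∀ a : A, 0 < Pr p (fun ω => x1 (x ω) = a) →
      (cPr p (fun ω => e (x ω) = 0) (fun ω => x1 (x ω) = a)
          = Pr p (fun ω => g (x ω) = true)
        ∧ 0 < cPr p (fun ω => e (x ω) = 0) (fun ω => x1 (x ω) = a)
        ∧ cPr p (fun ω => e (x ω) = 0) (fun ω => x1 (x ω) = a) < 1
        ∧ cPr p (fun ω => g (x ω) = true)
            (fun ω => x1 (x ω) = a ∧ e (x ω) = 0) = 1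
        ∧ cPr p (fun ω => g (x ω) = true)
            (fun ω => x1 (x ω) = a ∧ ¬ e (x ω) = 0) = 0
        ∧ ¬ CondIndepBin p (fun ω => g (x ω)) (fun ω => e (x ω) = 0)
            (fun ω => x1 (x ω) = a)) := by
  intro a ha
  simp only [he]
  have hjoint : Pr p (fun ω => x1 (x ω) = a ∧ g (x ω) = true)
      = Pr p (fun ω => x1 (x ω) = a) * Pr p (fun ω => g (x ω) = true) :=
    Pr_and_eq_mul_of_forall_and_eq p (fun ω => x2 (x ω)) fun b => hindep a b true
  have hcond : cPr p (fun ω => g (x ω) = true) (fun ω => x1 (x ω) = a)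
      = Pr p (fun ω => g (x ω) = true) :=
    cPr_eq_Pr_of_indep p ha.ne' hjoint
  refine ⟨hcond, hcond ▸ h0, hcond ▸ h1, ?_, cPr_eq_zero_of_imp_not p fun _ => And.right,
    not_condIndepBin_self p _ true _ (hcond ▸ h0) (hcond ▸ h1)⟩
  exact cPr_eq_one_of_imp p (hjoint ▸ (mul_pos ha h0).ne') fun _ => And.right

/-- position-based encoding satisfies the encoding definition.  The label
`y = g(x)` (`true` = dog) is deterministic in `x`, the background coordinates `(x₁, x₂)`
are jointly independent of `y` with `0 < P(y = dog) < 1`, and the explanation selects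
coordinate 1 (`e x = 0`) exactly when the label is dog.  Then for every `a` with
`P(x₁ = a) > 0`: `P(E_{ξ₁}=1 | x₁=a) = P(y=dog) ∈ (0,1)`,
`P(y=dog | x₁=a, E_{ξ₁}=1) = 1 ≠ 0 = P(y=dog | x₁=a, E_{ξ₁}=0)`, so `y` is conditionally
dependent on `E_{ξ₁}` given `x₁ = a`, i.e. the explanation is encoding. -/
theorem position_based_encoding
    {Ω X A : Type*} [Fintype Ω] [Fintype A]
    (p : Ω → ℝ) (hp : ∀ ω, 0 ≤ p ω) (hsum : ∑ ω, p ω = 1)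
    (x : Ω → X) (x1 x2 : X → A) (g : X → Bool)
    (e : X → Fin 2) (he : ∀ z, e z = 0 ↔ g z = true)
    (hindep : ∀ (a b : A) (c : Bool),
      Pr p (fun ω => x1 (x ω) = a ∧ x2 (x ω) = b ∧ g (x ω) = c)
        = Pr p (fun ω => x1 (x ω) = a ∧ x2 (x ω) = b) * Pr p (fun ω => g (x ω) = c))
    (h0 : 0 < Pr p (fun ω => g (x ω) = true))
    (h1 : Pr p (fun ω => g (x ω) = true) < 1) :
    ∀ a : A, 0 < Pr p (fun ω => x1 (x ω) = a) →
      (cPr p (fun ω => e (x ω) = 0) (fun ω => x1 (x ω) = a)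
          = Pr p (fun ω => g (x ω) = true)
        ∧ 0 < cPr p (fun ω => e (x ω) = 0) (fun ω => x1 (x ω) = a)
        ∧ cPr p (fun ω => e (x ω) = 0) (fun ω => x1 (x ω) = a) < 1
        ∧ cPr p (fun ω => g (x ω) = true)
            (fun ω => x1 (x ω) = a ∧ e (x ω) = 0) = 1
        ∧ cPr p (fun ω => g (x ω) = true)
            (fun ω => x1 (x ω) = a ∧ ¬ e (x ω) = 0) = 0
        ∧ ¬ CondIndepBin p (fun ω => g (x ω)) (fun ω => e (x ω) = 0)
            (fun ω => x1 (x ω) = a)) :=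
  position_based_encoding_general p x x1 x2 g e he hindep h0 h1
end
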